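/- Density bounds for Bhattacharya geodesics: Let p₀, p₁ ∈ 𝐏 and let γ be the Bhattacharya geodesic between p₀ and p₁. Then for every s ∈ [0,1] and a.e. x ∈ Ω: min{p₀(x), p₁(x)} ≤ γ(s,x) ≤ 2·max{p₀(x), p₁(x)}. -/

import Mathlib

open MeasureTheory Real Set Filter

noncomputable section

/-- The reference measure on `Ω = (0,1)`. -/
def μΩ : Measure ℝ := volume.restrict (Set.Ioo 0 1)

/-- Membership in `𝐏`: positive a.e. probability densities on `Ω = (0,1)`. -/
def memP (p : ℝ → ℝ) : Prop :=
  Measurable p ∧ (∀ᵐ x ∂μΩ, 0 < p x) ∧ Integrable p μΩ ∧ (∫ x in Set.Ioo (0:ℝ) 1, p x) = 1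

/-- The Hellinger distance. -/
def He (p₀ p₁ : ℝ → ℝ) : ℝ :=
  Real.sqrt (∫ x in Set.Ioo (0:ℝ) 1, (Real.sqrt (p₁ x) - Real.sqrt (p₀ x))^2)

/-- The Bhattacharya distance. -/
def Bh (p₀ p₁ : ℝ → ℝ) : ℝ := 2 * Real.arcsin (He p₀ p₁ / 2)

/-- The reparametrization `t(s)` of the Bhattacharya geodesic. -/
def tgeo (δ s : ℝ) : ℝ :=
  if δ = 0 then s
  else Real.sin (s * δ) / (Real.sin (s * δ) + Real.sin ((1 - s) * δ))

/-- The normalization factor `ñ(t)`. -/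
def ngeo (δ t : ℝ) : ℝ := 1 / (1 - 2 * (t - t^2) * (1 - Real.cos δ))

/-- The Bhattacharya geodesic between `p₀` and `p₁`. -/
def geo (p₀ p₁ : ℝ → ℝ) (s x : ℝ) : ℝ :=
  ngeo (Bh p₀ p₁) (tgeo (Bh p₀ p₁) s) *
    ((1 - tgeo (Bh p₀ p₁) s) * Real.sqrt (p₀ x) + tgeo (Bh p₀ p₁) s * Real.sqrt (p₁ x))^2

/-! The geodesic at time `s` is `ñ · c²` with `c = (1 - t)√p₀ + t√p₁`, where `t ∈ [0,1]` because
both sines in its definition are nonnegative for `δ ∈ [0,π]`. So pointwise `c²` lies between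
`min p₀ p₁` and `max p₀ p₁`. It remains to see `ñ ∈ [1,2]`: since `t - t² ≤ 1/4`, this holds as
soon as `cos δ ≥ 0`, i.e. `δ ≤ π/2`, and that follows from
`He² = ∫ (√p₁ - √p₀)² ≤ ∫ p₀ + ∫ p₁ = 2`. -/

lemma sq_sqrt_sub_sqrt_le_add {a b : ℝ} (ha : 0 ≤ a) (hb : 0 ≤ b) : (√b - √a) ^ 2 ≤ a + b := by
  nlinarith [sq_sqrt ha, sq_sqrt hb, mul_nonneg (sqrt_nonneg a) (sqrt_nonneg b)]

lemma integral_sq_sqrt_sub_sqrt_le {α : Type*} [MeasurableSpace α] {μ : Measure α} {f g : α → ℝ}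
    (hf : 0 ≤ᵐ[μ] f) (hg : 0 ≤ᵐ[μ] g) (hfi : Integrable f μ) (hgi : Integrable g μ) :
    ∫ x, (√(g x) - √(f x)) ^ 2 ∂μ ≤ ∫ x, f x ∂μ + ∫ x, g x ∂μ := by
  rw [← integral_add hfi hgi]
  refine integral_mono_of_nonneg (Eventually.of_forall fun _ => sq_nonneg _) (hfi.add hgi) ?_
  filter_upwards [hf, hg] with x hfx hgx
  exact sq_sqrt_sub_sqrt_le_add hfx hgx

lemma He_le_sqrt_two {p₀ p₁ : ℝ → ℝ} (h₀ : memP p₀) (h₁ : memP p₁) : He p₀ p₁ ≤ √2 := by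
  obtain ⟨-, hpos₀, hint₀, hnorm₀⟩ := h₀
  obtain ⟨-, hpos₁, hint₁, hnorm₁⟩ := h₁
  refine sqrt_le_sqrt ?_
  calc ∫ x in Ioo (0:ℝ) 1, (√(p₁ x) - √(p₀ x)) ^ 2
      ≤ (∫ x in Ioo (0:ℝ) 1, p₀ x) + ∫ x in Ioo (0:ℝ) 1, p₁ x :=
        integral_sq_sqrt_sub_sqrt_le (hpos₀.mono fun _ hx => hx.le) (hpos₁.mono fun _ hx => hx.le)
          hint₀ hint₁
    _ = 2 := by rw [hnorm₀, hnorm₁]; norm_num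

lemma Bh_nonneg (p₀ p₁ : ℝ → ℝ) : 0 ≤ Bh p₀ p₁ :=
  mul_nonneg zero_le_two (arcsin_nonneg.2 (div_nonneg (sqrt_nonneg _) zero_le_two))

lemma Bh_le_pi (p₀ p₁ : ℝ → ℝ) : Bh p₀ p₁ ≤ π := by
  unfold Bh
  linarith [arcsin_le_pi_div_two (He p₀ p₁ / 2)]

lemma Bh_le_pi_div_two {p₀ p₁ : ℝ → ℝ} (h₀ : memP p₀) (h₁ : memP p₁) : Bh p₀ p₁ ≤ π / 2 := by
  have hπ := pi_pos
  have harcsin : arcsin (He p₀ p₁ / 2) ≤ π / 4 := by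
    rw [arcsin_le_iff_le_sin' ⟨by linarith, by linarith⟩, sin_pi_div_four]
    linarith [He_le_sqrt_two h₀ h₁]
  unfold Bh
  linarith

lemma sin_mul_nonneg_of_mem_Icc {s δ : ℝ} (hs : s ∈ Icc (0:ℝ) 1) (hδ : δ ∈ Icc 0 π) :
    0 ≤ sin (s * δ) :=
  sin_nonneg_of_nonneg_of_le_pi (mul_nonneg hs.1 hδ.1)
    ((mul_le_of_le_one_left hδ.1 hs.2).trans hδ.2)

lemma tgeo_mem_Icc {δ s : ℝ} (hδ : δ ∈ Icc 0 π) (hs : s ∈ Icc (0:ℝ) 1) :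
    tgeo δ s ∈ Icc (0:ℝ) 1 := by
  unfold tgeo
  split_ifs
  · exact hs
  have hA := sin_mul_nonneg_of_mem_Icc hs hδ
  have hB := sin_mul_nonneg_of_mem_Icc ⟨sub_nonneg.2 hs.2, sub_le_self 1 hs.1⟩ hδ
  exact ⟨div_nonneg hA (add_nonneg hA hB),
    div_le_one_of_le₀ (le_add_of_nonneg_right hB) (add_nonneg hA hB)⟩

lemma ngeo_mem_Icc {δ t : ℝ} (hδ : 0 ≤ cos δ) (ht : t ∈ Icc (0:ℝ) 1) :
    ngeo δ t ∈ Icc (1:ℝ) 2 := by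
  have hq₀ : 0 ≤ t - t ^ 2 := by nlinarith [ht.1, ht.2]
  have hq₁ : t - t ^ 2 ≤ 1 / 4 := by nlinarith [sq_nonneg (2 * t - 1)]
  have hc₀ : 0 ≤ 1 - cos δ := sub_nonneg.2 (cos_le_one δ)
  have hd₀ : 1 / 2 ≤ 1 - 2 * (t - t ^ 2) * (1 - cos δ) := by nlinarith
  have hd₁ : 1 - 2 * (t - t ^ 2) * (1 - cos δ) ≤ 1 := by nlinarith
  unfold ngeo
  constructor
  · rw [le_div_iff₀ (by linarith)]; linarith
  · rw [div_le_iff₀ (by linarith)]; linarith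

lemma combo_sqrt_nonneg (a b : ℝ) {t : ℝ} (ht : t ∈ Icc (0:ℝ) 1) :
    0 ≤ (1 - t) * √a + t * √b :=
  add_nonneg (mul_nonneg (sub_nonneg.2 ht.2) (sqrt_nonneg a)) (mul_nonneg ht.1 (sqrt_nonneg b))

lemma min_le_sq_combo_sqrt (a b : ℝ) {t : ℝ} (ht : t ∈ Icc (0:ℝ) 1) :
    min a b ≤ ((1 - t) * √a + t * √b) ^ 2 := by
  rw [← sqrt_le_left (combo_sqrt_nonneg a b ht), sqrt_monotone.map_min]
  exact Convex.min_le_combo (√a) (√b) (sub_nonneg.2 ht.2) ht.1 (sub_add_cancel 1 t)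

lemma sq_combo_sqrt_le_max {a b t : ℝ} (ha : 0 ≤ a) (ht : t ∈ Icc (0:ℝ) 1) :
    ((1 - t) * √a + t * √b) ^ 2 ≤ max a b := by
  rw [← le_sqrt (combo_sqrt_nonneg a b ht) (ha.trans (le_max_left a b)), sqrt_monotone.map_max]
  exact Convex.combo_le_max (√a) (√b) (sub_nonneg.2 ht.2) ht.1 (sub_add_cancel 1 t)

/-- Density bounds for Bhattacharya geodesics. -/
theorem bhattacharya_geodesic_density_bounds
    (p₀ p₁ : ℝ → ℝ) (h₀ : memP p₀) (h₁ : memP p₁) :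
    ∀ s ∈ Set.Icc (0:ℝ) 1, ∀ᵐ x ∂μΩ,
      min (p₀ x) (p₁ x) ≤ geo p₀ p₁ s x ∧
      geo p₀ p₁ s x ≤ 2 * max (p₀ x) (p₁ x) := by
  intro s hs
  have hδ : Bh p₀ p₁ ∈ Icc 0 π := ⟨Bh_nonneg p₀ p₁, Bh_le_pi p₀ p₁⟩
  have hcos : 0 ≤ cos (Bh p₀ p₁) :=
    cos_nonneg_of_mem_Icc ⟨by linarith [pi_pos, hδ.1], Bh_le_pi_div_two h₀ h₁⟩
  have ht := tgeo_mem_Icc hδ hs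
  obtain ⟨hn₁, hn₂⟩ := ngeo_mem_Icc hcos ht
  filter_upwards [h₀.2.1] with x hx₀
  unfold geo
  constructor
  · exact (min_le_sq_combo_sqrt _ _ ht).trans (le_mul_of_one_le_left (sq_nonneg _) hn₁)
  · exact mul_le_mul hn₂ (sq_combo_sqrt_le_max hx₀.le ht) (sq_nonneg _) zero_le_two

end
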